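/- Let W be a minimum zero blocking set of the grid graph G_{m,n} (with n ≥ m ≥ 2), and for each integer x with 1 ≤ x ≤ n let d(x) = min{ |x − a| : (a,1) ∈ W }. If (x,y) is a vertex of G_{m,n} with y = d(x) + 1 and there is a unique a with (a,1) ∈ W and |x − a| = d(x), then (x,y) is white, i.e., (x,y) ∈ W. -/

import Mathlib

/-- A set `S` is closed under the zero forcing rule: whenever a (black) vertex
`v ∈ S` has exactly one neighbor outside `S`, that neighbor lies in `S`. -/
def ZFClosed {V : Type*} (G : SimpleGraph V) (S : Set V) : Prop :=
  ∀ v ∈ S, ∀ w : V, G.neighborSet v \ S = {w} → w ∈ S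

/-- The final black set of the zero forcing process started from `B`:
the smallest superset of `B` closed under the zero forcing rule. -/
def zfClosure {V : Type*} (G : SimpleGraph V) (B : Set V) : Set V :=
  ⋂₀ {S : Set V | B ⊆ S ∧ ZFClosed G S}

/-- `B` is a zero forcing set if the process colors every vertex black. -/
def IsZeroForcingSet {V : Type*} (G : SimpleGraph V) (B : Set V) : Prop :=
  zfClosure G B = Set.univ

/-- `W` is a zero blocking set if its complement is not a zero forcing set. -/
def IsZeroBlockingSet {V : Type*} (G : SimpleGraph V) (W : Set V) : Prop :=
  ¬ IsZeroForcingSet G Wᶜ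

/-- The zero blocking number: minimum size of a zero blocking set. -/
noncomputable def zeroBlockingNumber {V : Type*} (G : SimpleGraph V) : ℕ :=
  sInf {k : ℕ | ∃ W : Set V, IsZeroBlockingSet G W ∧ W.ncard = k}

/-- A minimum zero blocking set. -/
def IsMinZeroBlockingSet {V : Type*} (G : SimpleGraph V) (W : Set V) : Prop :=
  IsZeroBlockingSet G W ∧ W.ncard = zeroBlockingNumber G

/-- Vertices of the grid graph `G_{m,n}`: lattice points `(x,y)` with
`1 ≤ x ≤ n` and `1 ≤ y ≤ m`. -/
abbrev GridVert (m n : ℤ) : Type :=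
  {p : ℤ × ℤ // 1 ≤ p.1 ∧ p.1 ≤ n ∧ 1 ≤ p.2 ∧ p.2 ≤ m}

/-- The grid graph `G_{m,n} = P_m □ P_n`. -/
def gridGraph (m n : ℤ) : SimpleGraph (GridVert m n) where
  Adj p q := |p.val.1 - q.val.1| + |p.val.2 - q.val.2| = 1
  symm := by
    constructor
    intro p q h
    rw [abs_sub_comm, abs_sub_comm p.val.2] at h
    exact h
  loopless := by
    constructor
    intro p h
    simp at h

lemma zfClosure_superset {V : Type*} (G : SimpleGraph V) (B : Set V) : B ⊆ zfClosure G B :=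
  Set.subset_sInter fun _ hS => hS.1

lemma zfClosed_zfClosure {V : Type*} (G : SimpleGraph V) (B : Set V) :
    ZFClosed G (zfClosure G B) := by
  intro v hv w hw
  intro S hS
  have hCS : zfClosure G B ⊆ S := Set.sInter_subset_of_mem hS
  have hvS : v ∈ S := hCS hv
  have hwv : w ∈ G.neighborSet v ∧ w ∉ zfClosure G B := by
    have h : w ∈ ({w} : Set V) := rfl
    rw [← hw] at h; exact ⟨h.1, h.2⟩
  by_cases hwS : w ∈ S
  · exact hwS
  · apply hS.2 v hvS w
    ext z
    constructor
    · intro hz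
      have : z ∈ G.neighborSet v \ zfClosure G B := ⟨hz.1, fun h => hz.2 (hCS h)⟩
      rw [hw] at this; exact this
    · intro hz
      rw [Set.mem_singleton_iff] at hz; subst hz; exact ⟨hwv.1, hwS⟩

lemma zfClosure_le {V : Type*} (G : SimpleGraph V) (B S : Set V) (h1 : B ⊆ S)
    (h2 : ZFClosed G S) : zfClosure G B ⊆ S :=
  Set.sInter_subset_of_mem ⟨h1, h2⟩

instance gridFinite (m n : ℤ) : Finite (GridVert m n) := by
  have h : {p : ℤ × ℤ | 1 ≤ p.1 ∧ p.1 ≤ n ∧ 1 ≤ p.2 ∧ p.2 ≤ m}.Finite := by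
    apply Set.Finite.subset ((Set.finite_Icc (1:ℤ) n).prod (Set.finite_Icc (1:ℤ) m))
    rintro ⟨x, y⟩ ⟨h1, h2, h3, h4⟩
    exact ⟨⟨h1, h2⟩, ⟨h3, h4⟩⟩
  exact h.to_subtype

/-- The complement of a minimum zero blocking set is closed under the forcing rule. -/
lemma minZBS_compl_closed {m n : ℤ} {W : Set (GridVert m n)}
    (hW : IsMinZeroBlockingSet (gridGraph m n) W) : ZFClosed (gridGraph m n) Wᶜ := by
  set G := gridGraph m n
  set C := zfClosure G Wᶜ with hC
  have hsub : Wᶜ ⊆ C := zfClosure_superset G Wᶜ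
  have hcl : ZFClosed G C := zfClosed_zfClosure G Wᶜ
  have hCne : C ≠ Set.univ := hW.1
  have hUblock : IsZeroBlockingSet G Cᶜ := by
    intro h
    have h' : zfClosure G Cᶜᶜ = Set.univ := h
    rw [compl_compl] at h'
    have : zfClosure G C ⊆ C := zfClosure_le G C C subset_rfl hcl
    rw [h'] at this
    exact hCne (Set.univ_subset_iff.mp this)
  have hUsub : Cᶜ ⊆ W := by
    rw [Set.compl_subset_comm] at hsub
    simpa using hsub
  have hle : zeroBlockingNumber G ≤ (Cᶜ).ncard := Nat.sInf_le ⟨Cᶜ, hUblock, rfl⟩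
  have hWle : W.ncard ≤ (Cᶜ).ncard := hW.2 ▸ hle
  have heq : Cᶜ = W := Set.eq_of_subset_of_ncard_le hUsub hWle (Set.toFinite W)
  have : C = Wᶜ := by rw [← heq, compl_compl]
  rw [← this]
  exact hcl

lemma adj_cases {m n : ℤ} {p q : GridVert m n} (h : (gridGraph m n).Adj p q) :
    (q.val.1 = p.val.1 + 1 ∧ q.val.2 = p.val.2) ∨ (q.val.1 = p.val.1 - 1 ∧ q.val.2 = p.val.2) ∨
    (q.val.1 = p.val.1 ∧ q.val.2 = p.val.2 + 1) ∨ (q.val.1 = p.val.1 ∧ q.val.2 = p.val.2 - 1) := by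
  have h' : |p.val.1 - q.val.1| + |p.val.2 - q.val.2| = 1 := h
  simp only [Int.abs_eq_natAbs] at h'
  omega

lemma adj_of_val {m n : ℤ} {p q : GridVert m n}
    (h : |p.val.1 - q.val.1| + |p.val.2 - q.val.2| = 1) : (gridGraph m n).Adj p q := h


/-- **Proposition 4, second part.** For a minimum zero blocking set `W` of `G_{m,n}`,
with `d x` the distance from `x` to the nearest white bottom-row vertex: any vertex
`(x, y)` with `y = d x + 1` having a unique nearest white bottom-row vertex is white. -/
theorem vertices_on_SXY_white (m n : ℤ) (hm : 2 ≤ m) (hmn : m ≤ n)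
    (W : Set (GridVert m n)) (hW : IsMinZeroBlockingSet (gridGraph m n) W)
    (d : ℤ → ℤ)
    (hd : ∀ x : ℤ, d x = sInf {k : ℤ | ∃ a : ℤ, (∃ A ∈ W, A.val = (a, 1)) ∧ k = |x - a|}) :
    ∀ A : GridVert m n, A.val.2 = d A.val.1 + 1 →
      (∃! a : ℤ, (∃ B ∈ W, B.val = (a, 1)) ∧ |A.val.1 - a| = d A.val.1) →
      A ∈ W := by
  intro A hA hex
  obtain ⟨a₀, ⟨ha₀W, ha₀d⟩, huniq⟩ := hex
  set G := gridGraph m n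
  have hstall : ZFClosed G Wᶜ := minZBS_compl_closed hW
  -- basic facts about d
  have hSne : ∀ x : ℤ, Set.Nonempty {k : ℤ | ∃ a : ℤ, (∃ A ∈ W, A.val = (a, 1)) ∧ k = |x - a|} :=
    fun x => ⟨|x - a₀|, a₀, ha₀W, rfl⟩
  have hSbdd : ∀ x : ℤ, BddBelow {k : ℤ | ∃ a : ℤ, (∃ A ∈ W, A.val = (a, 1)) ∧ k = |x - a|} := by
    intro x
    refine ⟨0, ?_⟩
    rintro k ⟨a, _, rfl⟩
    exact abs_nonneg _
  have hd_le : ∀ x a : ℤ, (∃ B ∈ W, B.val = (a, 1)) → d x ≤ |x - a| := by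
    intro x a ha
    rw [hd x]
    exact csInf_le (hSbdd x) ⟨a, ha, rfl⟩
  have hd_mem : ∀ x : ℤ, ∃ a : ℤ, (∃ B ∈ W, B.val = (a, 1)) ∧ d x = |x - a| := by
    intro x
    have := Int.csInf_mem (hSne x) (hSbdd x)
    rw [← hd x] at this
    exact this
  have hd_nonneg : ∀ x : ℤ, 0 ≤ d x := by
    intro x
    obtain ⟨a, _, h⟩ := hd_mem x
    rw [h]; exact abs_nonneg _
  have hd_lip : ∀ x y : ℤ, d x ≤ d y + |x - y| := by
    intro x y
    obtain ⟨a, ha, h⟩ := hd_mem y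
    calc d x ≤ |x - a| := hd_le x a ha
    _ ≤ |x - y| + |y - a| := by
        have := abs_sub_le x y a; linarith [abs_sub_le x y a]
    _ = d y + |x - y| := by rw [h]; ring
  -- Lemma 1: every vertex at height ≤ d(x) is black (not in W)
  have below : ∀ N : ℕ, ∀ p : GridVert m n, p.val.2 ≤ N → p.val.2 ≤ d p.val.1 → p ∉ W := by
    intro N
    induction N with
    | zero => intro p h _ _; have := p.property.2.2.1; omega
    | succ N ih =>
      intro p hpN hpd hpW
      by_cases hc : p.val.2 ≤ N
      · exact ih p hc hpd hpW
      have hy : p.val.2 = (N : ℤ) + 1 := by omega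
      have hy1 : 1 ≤ p.val.2 := p.property.2.2.1
      by_cases hbot : p.val.2 = 1
      · -- bottom row: p ∈ W gives d (p.val.1) = 0, contradiction with 1 ≤ d
        have : d p.val.1 ≤ |p.val.1 - p.val.1| := by
          apply hd_le
          exact ⟨p, hpW, Prod.ext rfl hbot⟩
        simp at this
        omega
      -- interior: use the vertex below p
      have hN1 : 1 ≤ (N : ℤ) := by omega
      have hu : 1 ≤ p.val.2 - 1 ∧ p.val.2 - 1 ≤ m := ⟨by omega, by have := p.property.2.2.2; omega⟩
      set x := p.val.1 with hx
      have hxb := p.property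
      let u : GridVert m n := ⟨(x, p.val.2 - 1), ⟨hxb.1, hxb.2.1, hu.1, hu.2⟩⟩
      have huW : u ∉ W := by
        apply ih u (by simp [u]; omega) (by simp [u]; omega)
      have hset : G.neighborSet u \ Wᶜ = {p} := by
        ext w
        simp only [Set.mem_diff, Set.mem_singleton_iff, Set.mem_compl_iff, not_not,
          SimpleGraph.mem_neighborSet]
        constructor
        · rintro ⟨hadj, hwW⟩
          rcases adj_cases hadj with ⟨h1, h2⟩ | ⟨h1, h2⟩ | ⟨h1, h2⟩ | ⟨h1, h2⟩
          · -- w = (x+1, y-1)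
            exfalso
            simp [u] at h1 h2
            refine ih w (by omega) ?_ hwW
            have h9 := hd_lip x (x + 1)
            simp only [Int.abs_eq_natAbs] at h9
            rw [h1]
            omega
          · -- w = (x-1, y-1)
            exfalso
            simp [u] at h1 h2
            refine ih w (by omega) ?_ hwW
            have h9 := hd_lip x (x - 1)
            simp only [Int.abs_eq_natAbs] at h9
            rw [h1]
            omega
          · -- w = (x, y) = p
            apply Subtype.ext
            simp [u] at h1 h2
            exact Prod.ext h1 (by omega)
          · -- w = (x, y-2)
            exfalso
            simp [u] at h1 h2
            refine ih w (by omega) ?_ hwW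
            rw [h1]
            omega
        · rintro rfl
          refine ⟨?_, hpW⟩
          apply adj_of_val
          simp [u]
          exact sub_self _
      have := hstall u huW p hset
      exact this hpW
  -- Main induction on d x
  have main : ∀ k : ℕ, ∀ p : GridVert m n, p.val.2 = d p.val.1 + 1 → d p.val.1 = (k : ℤ) →
      (∃! a : ℤ, (∃ B ∈ W, B.val = (a, 1)) ∧ |p.val.1 - a| = d p.val.1) → p ∈ W := by
    intro k
    induction k using Nat.strong_induction_on with
    | _ k ih =>
      intro p hpy hpk hexp
      obtain ⟨a, ⟨haW, had⟩, hun⟩ := hexp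
      obtain ⟨B, hBW, hBval⟩ := haW
      set x := p.val.1 with hx
      have hxb := p.property
      have haB := B.property
      have ha1 : 1 ≤ a := by rw [hBval] at haB; exact haB.1
      have han : a ≤ n := by rw [hBval] at haB; exact haB.2.1
      rcases Nat.eq_zero_or_pos k with hk0 | hkpos
      · -- d x = 0, so a = x and p = B
        subst hk0
        have hax : a = x := by
          have : |x - a| = 0 := by rw [had, hpk]; simp
          have := abs_eq_zero.mp this
          omega
        have : p.val = B.val := by
          rw [hBval, hax]
          have : p.val.2 = 1 := by rw [hpy, hpk]; simp
          exact Prod.ext rfl this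
        rwa [Subtype.ext this]
      · -- k ≥ 1
        have hk1 : (1 : ℤ) ≤ (k : ℤ) := by exact_mod_cast hkpos
        have hkm : (k : ℤ) ≤ m - 1 := by
          have := hxb.2.2.2; rw [hpy, hpk] at this; omega
        by_contra hpW
        have hane : a ≠ x := by
          intro h
          rw [h] at had
          simp at had
          omega
        -- the column-below vertex u = (x, k)
        let u : GridVert m n := ⟨(x, (k : ℤ)), ⟨hxb.1, hxb.2.1, hk1, by omega⟩⟩
        have huW : u ∉ W := below k.succ u (by simp [u]) (by simp [u]; omega)
        rcases lt_or_gt_of_ne hane with hax | hax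
        · -- a < x : cascade to the left; p' = (x-1, k)
          have hxa : x - a = (k : ℤ) := by
            have : |x - a| = (k : ℤ) := by rw [had, hpk]
            simp only [Int.abs_eq_natAbs] at this
            omega
          have hx1 : 1 ≤ x - 1 := by omega
          let p' : GridVert m n := ⟨(x - 1, (k : ℤ)), ⟨hx1, by omega, hk1, by omega⟩⟩
          -- d (x-1) = k - 1
          have hdx1 : d (x - 1) = (k : ℤ) - 1 := by
            have h1 : d (x - 1) ≤ |(x - 1) - a| := hd_le _ a ⟨B, hBW, hBval⟩
            have h2 : |(x - 1) - a| = (k : ℤ) - 1 := by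
              simp only [Int.abs_eq_natAbs]; omega
            have h3 := hd_lip x (x - 1)
            have h4 : |x - (x - 1)| = 1 := by simp only [Int.abs_eq_natAbs]; omega
            omega
          -- uniqueness at x - 1
          have hun' : ∃! a' : ℤ, (∃ B ∈ W, B.val = (a', 1)) ∧ |(x - 1) - a'| = d (x - 1) := by
            refine ⟨a, ⟨⟨B, hBW, hBval⟩, by simp only [Int.abs_eq_natAbs]; omega⟩, ?_⟩
            rintro a' ⟨ha'W, ha'd⟩
            apply hun a'
            refine ⟨ha'W, ?_⟩
            have h5 : d x ≤ |x - a'| := hd_le x a' ha'W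
            rw [hdx1] at ha'd
            rw [hpk]
            simp only [Int.abs_eq_natAbs] at ha'd h5 ⊢
            omega
          have hp'W : p' ∈ W := by
            apply ih (k - 1) (by omega) p'
            · simp [p']; omega
            · simp [p']; omega
            · exact hun'
          -- d (x+1) ≥ k
          have hdxp : (k : ℤ) ≤ d (x + 1) := by
            obtain ⟨a'', ha''W, ha''⟩ := hd_mem (x + 1)
            by_contra hlt
            push_neg at hlt
            have h5 : d x ≤ |x - a''| := hd_le x a'' ha''W
            have h6 : |x - a''| ≤ |x + 1 - a''| + 1 := by
              simp only [Int.abs_eq_natAbs]; omega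
            have h7 : |x - a''| = (k : ℤ) := by
              rw [hpk] at h5; simp only [Int.abs_eq_natAbs] at h5 h6 ha'' ⊢; omega
            have := hun a'' ⟨ha''W, by rw [h7, hpk]⟩
            subst this
            simp only [Int.abs_eq_natAbs] at h7 ha''
            omega
          -- forcing at u
          have hset : G.neighborSet u \ Wᶜ = {p'} := by
            ext w
            simp only [Set.mem_diff, Set.mem_singleton_iff, Set.mem_compl_iff, not_not,
              SimpleGraph.mem_neighborSet]
            constructor
            · rintro ⟨hadj, hwW⟩
              rcases adj_cases hadj with ⟨h1, h2⟩ | ⟨h1, h2⟩ | ⟨h1, h2⟩ | ⟨h1, h2⟩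
              · -- w = (x+1, k): below curve since d(x+1) ≥ k
                exfalso
                simp [u] at h1 h2
                refine below k.succ w (by omega) ?_ hwW
                rw [h1, h2]
                exact hdxp
              · -- w = (x-1, k) = p'
                apply Subtype.ext
                simp [u] at h1 h2
                exact Prod.ext h1 h2
              · -- w = (x, k+1) = p ∉ W
                exfalso
                apply hpW
                simp [u] at h1 h2
                have hwp : w.val = p.val := Prod.ext h1 (by omega)
                exact Subtype.ext hwp ▸ hwW
              · -- w = (x, k-1): below curve
                exfalso
                simp [u] at h1 h2
                refine below k.succ w (by omega) ?_ hwW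
                rw [h1, h2]
                omega
            · rintro rfl
              refine ⟨?_, hp'W⟩
              apply adj_of_val
              simp [u, p']
          exact hstall u huW p' hset hp'W
        · -- a > x : symmetric; p' = (x+1, k)
          have hxa : a - x = (k : ℤ) := by
            have : |x - a| = (k : ℤ) := by rw [had, hpk]
            simp only [Int.abs_eq_natAbs] at this
            omega
          have hxn : x + 1 ≤ n := by omega
          let p' : GridVert m n := ⟨(x + 1, (k : ℤ)), ⟨by omega, hxn, hk1, by omega⟩⟩
          have hdx1 : d (x + 1) = (k : ℤ) - 1 := by
            have h1 : d (x + 1) ≤ |(x + 1) - a| := hd_le _ a ⟨B, hBW, hBval⟩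
            have h2 : |(x + 1) - a| = (k : ℤ) - 1 := by
              simp only [Int.abs_eq_natAbs]; omega
            have h3 := hd_lip x (x + 1)
            have h4 : |x - (x + 1)| = 1 := by simp only [Int.abs_eq_natAbs]; omega
            omega
          have hun' : ∃! a' : ℤ, (∃ B ∈ W, B.val = (a', 1)) ∧ |(x + 1) - a'| = d (x + 1) := by
            refine ⟨a, ⟨⟨B, hBW, hBval⟩, by simp only [Int.abs_eq_natAbs]; omega⟩, ?_⟩
            rintro a' ⟨ha'W, ha'd⟩
            apply hun a'
            refine ⟨ha'W, ?_⟩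
            have h5 : d x ≤ |x - a'| := hd_le x a' ha'W
            rw [hdx1] at ha'd
            rw [hpk]
            simp only [Int.abs_eq_natAbs] at ha'd h5 ⊢
            omega
          have hp'W : p' ∈ W := by
            apply ih (k - 1) (by omega) p'
            · simp [p']; omega
            · simp [p']; omega
            · exact hun'
          have hdxm : (k : ℤ) ≤ d (x - 1) := by
            obtain ⟨a'', ha''W, ha''⟩ := hd_mem (x - 1)
            by_contra hlt
            push_neg at hlt
            have h5 : d x ≤ |x - a''| := hd_le x a'' ha''W
            have h6 : |x - a''| ≤ |x - 1 - a''| + 1 := by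
              simp only [Int.abs_eq_natAbs]; omega
            have h7 : |x - a''| = (k : ℤ) := by
              rw [hpk] at h5; simp only [Int.abs_eq_natAbs] at h5 h6 ha'' ⊢; omega
            have := hun a'' ⟨ha''W, by rw [h7, hpk]⟩
            subst this
            simp only [Int.abs_eq_natAbs] at h7 ha''
            omega
          have hset : G.neighborSet u \ Wᶜ = {p'} := by
            ext w
            simp only [Set.mem_diff, Set.mem_singleton_iff, Set.mem_compl_iff, not_not,
              SimpleGraph.mem_neighborSet]
            constructor
            · rintro ⟨hadj, hwW⟩
              rcases adj_cases hadj with ⟨h1, h2⟩ | ⟨h1, h2⟩ | ⟨h1, h2⟩ | ⟨h1, h2⟩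
              · -- w = (x+1, k) = p'
                apply Subtype.ext
                simp [u] at h1 h2
                exact Prod.ext h1 h2
              · -- w = (x-1, k): below curve since d(x-1) ≥ k
                exfalso
                simp [u] at h1 h2
                refine below k.succ w (by omega) ?_ hwW
                rw [h1, h2]
                exact hdxm
              · -- w = (x, k+1) = p ∉ W
                exfalso
                apply hpW
                simp [u] at h1 h2
                have hwp : w.val = p.val := Prod.ext h1 (by omega)
                exact Subtype.ext hwp ▸ hwW
              · -- w = (x, k-1): below curve
                exfalso
                simp [u] at h1 h2
                refine below k.succ w (by omega) ?_ hwW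
                rw [h1, h2]
                omega
            · rintro rfl
              refine ⟨?_, hp'W⟩
              apply adj_of_val
              simp [u, p']
          exact hstall u huW p' hset hp'W
  -- apply main
  have h0 : 0 ≤ d A.val.1 := hd_nonneg A.val.1
  exact main (d A.val.1).toNat A hA (by omega) ⟨a₀, ⟨ha₀W, ha₀d⟩, huniq⟩
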